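/- Let f, g : ℝ → ℝ be continuous and Lebesgue integrable, and define (∂⁻¹f)(x) = (1/2)∫_{−∞}^{x} f − (1/2)∫_{x}^{∞} f, and similarly for g. Assume f·∂⁻¹g and g·∂⁻¹f are integrable. Then ∫_ℝ (∂⁻¹f)(x) g(x) dx = − ∫_ℝ f(x) (∂⁻¹g)(x) dx, i.e., ∂⁻¹ is a skew-symmetric operator with respect to the L² pairing. -/

import Mathlib

/-! `F = ∂⁻¹f` and `G = ∂⁻¹g` are antiderivatives of `f` and `g`, so `(F G)' = f G + F g`, and
the integral of `f G + F g` over `ℝ` is the difference of the limits of `F G` at `±∞`. Since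
`F → ±(∫ f)/2` and `G → ±(∫ g)/2` as `x → ±∞`, both limits are `(∫ f)(∫ g)/4`. -/

open MeasureTheory Real

noncomputable def symmAntideriv (f : ℝ → ℝ) (x : ℝ) : ℝ :=
  (1 / 2) * (∫ s in Set.Iic x, f s) - (1 / 2) * ∫ s in Set.Ici x, f s

open Set Filter Topology

section

variable {f : ℝ → ℝ}

theorem hasDerivAt_integral_Iic (hfi : Integrable f) {x : ℝ} (hf : ContinuousAt f x) :
    HasDerivAt (fun y => ∫ s in Iic y, f s) (f x) x := by
  have hsplit : (fun y => ∫ s in Iic y, f s) =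
      fun y => (∫ s in (0 : ℝ)..y, f s) + ∫ s in Iic 0, f s :=
    funext fun y => by
      rw [← intervalIntegral.integral_Iic_sub_Iic hfi.integrableOn hfi.integrableOn,
        sub_add_cancel]
  rw [hsplit]
  exact (intervalIntegral.integral_hasDerivAt_right hfi.intervalIntegrable
    hfi.aestronglyMeasurable.stronglyMeasurableAtFilter hf).add_const _

theorem integral_Iic_add_integral_Ici (hfi : Integrable f) (x : ℝ) :
    (∫ s in Iic x, f s) + ∫ s in Ici x, f s = ∫ s, f s := by
  rw [integral_Ici_eq_integral_Ioi,
    intervalIntegral.integral_Iic_add_Ioi hfi.integrableOn hfi.integrableOn]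

theorem symmAntideriv_eq_integral_Iic_sub (hfi : Integrable f) (x : ℝ) :
    symmAntideriv f x = (∫ s in Iic x, f s) - (∫ s, f s) / 2 := by
  rw [symmAntideriv, ← integral_Iic_add_integral_Ici hfi x]
  ring

theorem symmAntideriv_eq_sub_integral_Ici (hfi : Integrable f) (x : ℝ) :
    symmAntideriv f x = (∫ s, f s) / 2 - ∫ s in Ici x, f s := by
  rw [symmAntideriv, ← integral_Iic_add_integral_Ici hfi x]
  ring

theorem hasDerivAt_symmAntideriv (hfi : Integrable f) {x : ℝ} (hf : ContinuousAt f x) :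
    HasDerivAt (symmAntideriv f) (f x) x := by
  rw [funext (symmAntideriv_eq_integral_Iic_sub hfi)]
  exact (hasDerivAt_integral_Iic hfi hf).sub_const _

theorem tendsto_symmAntideriv_atTop (hfi : Integrable f) :
    Tendsto (symmAntideriv f) atTop (𝓝 ((∫ s, f s) / 2)) := by
  rw [funext (symmAntideriv_eq_sub_integral_Ici hfi)]
  simpa using (tendsto_integral_Ici_zero tendsto_id).const_sub ((∫ s, f s) / 2)

theorem tendsto_symmAntideriv_atBot (hfi : Integrable f) :
    Tendsto (symmAntideriv f) atBot (𝓝 (-((∫ s, f s) / 2))) := by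
  rw [funext (symmAntideriv_eq_integral_Iic_sub hfi)]
  simpa using (tendsto_integral_Iic_zero tendsto_id).sub_const ((∫ s, f s) / 2)

end

theorem symmAntideriv_skew (f g : ℝ → ℝ) (hf : Continuous f) (hg : Continuous g)
    (hfi : Integrable f) (hgi : Integrable g)
    (h1 : Integrable (fun x => f x * symmAntideriv g x))
    (h2 : Integrable (fun x => g x * symmAntideriv f x)) :
    ∫ x : ℝ, symmAntideriv f x * g x = -∫ x : ℝ, f x * symmAntideriv g x := by
  set F := symmAntideriv f
  set G := symmAntideriv g
  have h2' : Integrable fun x => F x * g x := by simpa only [mul_comm] using h2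
  have hderiv (x : ℝ) : HasDerivAt (fun y => F y * G y) (f x * G x + F x * g x) x :=
    (hasDerivAt_symmAntideriv hfi hf.continuousAt).mul
      (hasDerivAt_symmAntideriv hgi hg.continuousAt)
  have hbot : Tendsto (fun y => F y * G y) atBot (𝓝 ((∫ s, f s) / 2 * ((∫ s, g s) / 2))) := by
    simpa only [neg_mul_neg] using
      (tendsto_symmAntideriv_atBot hfi).mul (tendsto_symmAntideriv_atBot hgi)
  have htop : Tendsto (fun y => F y * G y) atTop (𝓝 ((∫ s, f s) / 2 * ((∫ s, g s) / 2))) :=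
    (tendsto_symmAntideriv_atTop hfi).mul (tendsto_symmAntideriv_atTop hgi)
  have hzero := integral_of_hasDerivAt_of_tendsto hderiv (h1.add h2') hbot htop
  rw [integral_add h1 h2', sub_self] at hzero
  linarith
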